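/- Let α > 0 and let x ∈ 𝒳 be a solution of Wright's equation x'(t) = -α(e^{x(t-1)} - 1). Then -α(e^α - 1) ≤ x(t) ≤ α for all t > 0. -/

import Mathlib

open Real Set Filter

noncomputable section

/-- `x` solves Wright's equation `x'(t) = -α (e^{x(t-1)} - 1)` on all of `ℝ`. -/
def WrightSol (α : ℝ) (x : ℝ → ℝ) : Prop :=
  ∀ t : ℝ, HasDerivAt x (-α * (Real.exp (x (t - 1)) - 1)) t

/-- The space 𝒳: C¹ functions with `x 0 = 0`, `x' 0 > 0` and `x < 0` on `(-1,0)`. -/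
def InX (x : ℝ → ℝ) : Prop :=
  ContDiff ℝ 1 x ∧ x 0 = 0 ∧ 0 < deriv x 0 ∧ ∀ t ∈ Set.Ioo (-1 : ℝ) 0, x t < 0

/-- A slowly oscillating periodic solution in 𝒳, with first zero `q` and data `qbar`:
positive on `(0,q)`, negative on `(q, q+qbar)`, periodic with minimal period `q+qbar`. -/
def SOPSX (α q qbar : ℝ) (x : ℝ → ℝ) : Prop :=
  InX x ∧ WrightSol α x ∧ 1 < q ∧ 1 < qbar ∧
  (∀ t ∈ Set.Ioo 0 q, 0 < x t) ∧
  (∀ t ∈ Set.Ioo q (q + qbar), x t < 0) ∧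
  Function.Periodic x (q + qbar) ∧
  (∀ T : ℝ, 0 < T → Function.Periodic x T → q + qbar ≤ T)

/-- A slowly oscillating periodic solution (up to time translation). -/
def SOPS (α : ℝ) (x : ℝ → ℝ) : Prop :=
  WrightSol α x ∧
  ∃ q qbar : ℝ, 1 < q ∧ 1 < qbar ∧
    (∃ τ : ℝ, (∀ t ∈ Set.Ioo 0 q, 0 < x (t + τ)) ∧
      (∀ t ∈ Set.Ioo q (q + qbar), x (t + τ) < 0)) ∧
    Function.Periodic x (q + qbar) ∧
    (∀ T : ℝ, 0 < T → Function.Periodic x T → q + qbar ≤ T)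

/-!
Both bounds come from the last sign change before time `t`. For the upper bound let `z ≤ t`
be the last time with `x z ≤ 0`. Since `x' ≤ α` everywhere, `x ≤ α` on `[z, z + 1]`; after
`z + 1` the delayed value `x (s - 1)` is positive, so `x' < 0` and `x` decreases. The lower
bound is symmetric, with `x' ≥ -α (e^α - 1)` coming from the upper bound on the delayed value.
-/

lemma sub_le_mul_sub_of_hasDerivAt_le {x f : ℝ → ℝ} (hd : ∀ t, HasDerivAt x (f t) t)
    {a b c : ℝ} (hab : a ≤ b) (hc : ∀ t ∈ Ioo a b, f t ≤ c) :
    x b - x a ≤ c * (b - a) :=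
  (convex_Icc a b).image_sub_le_mul_sub_of_deriv_le
    (fun t _ => (hd t).continuousAt.continuousWithinAt)
    (fun t _ => (hd t).differentiableAt.differentiableWithinAt)
    (fun t ht => by rw [interior_Icc] at ht; rw [(hd t).deriv]; exact hc t ht)
    a (left_mem_Icc.2 hab) b (right_mem_Icc.2 hab) hab

lemma le_add_of_hasDerivAt_le_of_nonpos {x f : ℝ → ℝ} (hd : ∀ t, HasDerivAt x (f t) t)
    {z b c : ℝ} (hzb : z ≤ b) (hc : 0 ≤ c) (hstep : ∀ t ∈ Ioo z (z + 1), f t ≤ c)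
    (hnonpos : ∀ t ∈ Ioo (z + 1) b, f t ≤ 0) : x b ≤ x z + c := by
  rcases le_or_gt b (z + 1) with hb | hb
  · have := sub_le_mul_sub_of_hasDerivAt_le hd hzb fun t ht => hstep t ⟨ht.1, ht.2.trans_le hb⟩
    nlinarith
  · have hstep' := sub_le_mul_sub_of_hasDerivAt_le hd (by linarith) hstep
    have hdecr := sub_le_mul_sub_of_hasDerivAt_le hd hb.le hnonpos
    linarith

lemma IsClosed.exists_mem_Icc_forall_Ioc_notMem {s : Set ℝ} (hs : IsClosed s) {a b : ℝ}
    (ha : a ∈ s) (hab : a ≤ b) : ∃ z ∈ s, z ∈ Icc a b ∧ ∀ t ∈ Ioc z b, t ∉ s := by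
  obtain ⟨z, ⟨hzs, hzI⟩, hmax⟩ :=
    (isCompact_Icc.inter_left hs).exists_isGreatest ⟨a, ha, left_mem_Icc.2 hab⟩
  refine ⟨z, hzs, hzI, fun t ht hts => ?_⟩
  exact (hmax ⟨hts, hzI.1.trans ht.1.le, ht.2⟩).not_gt ht.1

namespace WrightSol

variable {α : ℝ} {x : ℝ → ℝ}

lemma continuous (hW : WrightSol α x) : Continuous x :=
  continuous_iff_continuousAt.2 fun t => (hW t).continuousAt

lemma apply_le_of_nonneg (hα : 0 ≤ α) (hW : WrightSol α x) (hx0 : x 0 ≤ 0)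
    {b : ℝ} (hb : 0 ≤ b) : x b ≤ α := by
  obtain ⟨z, hxz : x z ≤ 0, ⟨-, hzb⟩, hpos⟩ :=
    (isClosed_le hW.continuous continuous_const).exists_mem_Icc_forall_Ioc_notMem hx0 hb
  have := le_add_of_hasDerivAt_le_of_nonpos hW hzb hα
    (fun t _ => by nlinarith [exp_pos (x (t - 1))])
    (fun t ht => by
      have : 0 < x (t - 1) :=
        lt_of_not_ge (hpos (t - 1) ⟨by linarith [ht.1], by linarith [ht.2]⟩)
      nlinarith [add_one_le_exp (x (t - 1))])
  linarith

lemma le_apply_of_nonneg (hα : 0 ≤ α) (hW : WrightSol α x) (hx0 : 0 ≤ x 0)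
    (hle : ∀ s ∈ Ioi (-1), x s ≤ α) {b : ℝ} (hb : 0 ≤ b) :
    -α * (exp α - 1) ≤ x b := by
  obtain ⟨z, hxz : 0 ≤ x z, ⟨hz0, hzb⟩, hneg⟩ :=
    (isClosed_le continuous_const hW.continuous).exists_mem_Icc_forall_Ioc_notMem hx0 hb
  have hc : 0 ≤ α * (exp α - 1) := mul_nonneg hα (by linarith [one_le_exp hα])
  have := le_add_of_hasDerivAt_le_of_nonpos (fun t => (hW t).neg) hzb hc
    (fun t ht => by
      have := exp_le_exp.2 (hle (t - 1) (by simp only [mem_Ioi]; linarith [ht.1]))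
      nlinarith)
    (fun t ht => by
      have : x (t - 1) < 0 :=
        lt_of_not_ge (hneg (t - 1) ⟨by linarith [ht.1], by linarith [ht.2]⟩)
      nlinarith [exp_lt_one_iff.2 this])
  simp only [Pi.neg_apply] at this
  linarith

end WrightSol

theorem wright_global_extrema (α : ℝ) (hα : 0 < α) (x : ℝ → ℝ)
    (hX : InX x) (hW : WrightSol α x) :
    ∀ t : ℝ, 0 < t → -α * (Real.exp α - 1) ≤ x t ∧ x t ≤ α := by
  obtain ⟨-, hx0, -, hneg⟩ := hX
  have hupper : ∀ s, 0 ≤ s → x s ≤ α := fun s hs => hW.apply_le_of_nonneg hα.le hx0.le hs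
  have hle : ∀ s ∈ Ioi (-1), x s ≤ α := fun s hs => by
    rcases lt_or_ge s 0 with h | h
    · exact (hneg s ⟨hs, h⟩).le.trans hα.le
    · exact hupper s h
  intro t ht
  exact ⟨hW.le_apply_of_nonneg hα.le hx0.ge hle ht.le, hupper t ht.le⟩
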